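/- (PAC-Bayes via Donsker–Varadhan and Markov.) Let $p$ be a prior probability density over parameters $w$, let $\lambda > 0$, $\delta \in (0,1]$, and define $C(\lambda, p) = \log \mathbb{E}_{w\sim p, S \sim D^m}[e^{\lambda(L_D(w) - L_S(w))}]$ (assumed finite). Then with probability at least $1 - \delta$ over $S \sim D^m$, simultaneously for all posterior densities $q$: $\mathbb{E}_{w\sim q}[L_D(w)] \le \mathbb{E}_{w\sim q}[L_S(w)] + \frac{C(\lambda,p) + KL(q\|p) + \log(1/\delta)}{\lambda}$. -/

import Mathlib

/-!
For a fixed sample `S`, the Donsker–Varadhan inequality bounds `λ (E_q[L_D] - E_q[L_S])`, for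
every posterior `q` at once, by `KL(q‖p) + log E_p[exp (λ (L_D - L_S))]`. The prior integral
`E_p[exp (λ (L_D - L_S))]` is a nonnegative random variable of `S` with mean `exp C` (Fubini), so
by Markov's inequality it is below `exp C / δ`, i.e. its logarithm is below `C + log (1 / δ)`,
with probability at least `1 - δ`.
-/

open MeasureTheory Real

lemma MeasureTheory.Measure.AbsolutelyContinuous.neZero {W : Type*} [MeasurableSpace W]
    {μ ν : Measure W} [NeZero μ] (h : μ ≪ ν) : NeZero ν :=
  ⟨fun hν => NeZero.ne μ (Measure.absolutelyContinuous_zero_iff.mp (hν ▸ h))⟩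

/-- **Donsker–Varadhan**, from Gibbs' inequality `0 ≤ KL(q ‖ p.tilted f)`. -/
lemma integral_le_integral_llr_add_log_integral_exp {W : Type*} [MeasurableSpace W]
    {p q : Measure W} [SigmaFinite p] [IsProbabilityMeasure q] (hqp : q ≪ p) {f : W → ℝ}
    (hfq : Integrable f q) (hfp : Integrable (fun w => exp (f w)) p)
    (hllr : Integrable (llr q p) q) :
    ∫ w, f w ∂q ≤ ∫ w, llr q p w ∂q + log (∫ w, exp (f w) ∂p) := by
  have := hqp.neZero
  have := isProbabilityMeasure_tilted hfp
  have hgibbs := InformationTheory.integral_llr_add_sub_measure_univ_nonneg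
    (hqp.trans (absolutelyContinuous_tilted hfp)) (integrable_llr_tilted_right hqp hfq hllr hfp)
  rw [integral_llr_tilted_right hqp hfq hfp hllr] at hgibbs
  simp only [probReal_univ] at hgibbs
  linarith

lemma ofReal_one_sub_le_measure_lt_integral_div {Ω : Type*} [MeasurableSpace Ω]
    {μ : Measure Ω} [IsProbabilityMeasure μ] {F : Ω → ℝ} (hF : 0 ≤ᵐ[μ] F)
    (hFi : Integrable F μ) (hpos : 0 < ∫ x, F x ∂μ) {δ : ℝ} (hδ : 0 < δ) :
    ENNReal.ofReal (1 - δ) ≤ μ {x | F x < (∫ x, F x ∂μ) / δ} := by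
  set c := (∫ x, F x ∂μ) / δ
  have hmarkov : μ {x | c ≤ F x} ≤ ENNReal.ofReal δ := by
    have h := mul_meas_ge_le_integral_of_nonneg hF hFi c
    rw [← ofReal_measureReal]
    refine ENNReal.ofReal_le_ofReal ?_
    rwa [← le_div_iff₀' (div_pos hpos hδ), div_div_cancel₀ hpos.ne'] at h
  have hcompl : {x | c ≤ F x}ᶜ = {x | F x < c} := by ext; simp
  have htotal := measure_univ_le_add_compl (μ := μ) {x | c ≤ F x}
  rw [measure_univ, hcompl] at htotal
  rw [ENNReal.ofReal_sub _ hδ.le, ENNReal.ofReal_one]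
  exact tsub_le_iff_left.mpr (htotal.trans (by gcongr))

lemma integral_le_div_of_integral_exp_mul_le {W : Type*} [MeasurableSpace W]
    {p q : Measure W} [SigmaFinite p] [IsProbabilityMeasure q] (hqp : q ≪ p) {g : W → ℝ}
    {lam B : ℝ} (hlam : 0 < lam) (hgq : Integrable g q)
    (hgp : Integrable (fun w => exp (lam * g w)) p) (hllr : Integrable (llr q p) q)
    (hB : ∫ w, exp (lam * g w) ∂p ≤ exp B) :
    ∫ w, g w ∂q ≤ (∫ w, llr q p w ∂q + B) / lam := by
  have := hqp.neZero
  have hdv := integral_le_integral_llr_add_log_integral_exp hqp (hgq.const_mul lam) hgp hllr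
  have hlog : log (∫ w, exp (lam * g w) ∂p) ≤ B :=
    (log_le_iff_le_exp (integral_exp_pos hgp)).mpr hB
  rw [integral_const_mul] at hdv
  rw [le_div_iff₀' hlam]
  linarith

theorem pac_bayes_bound_general
    {X Y W : Type*} [MeasurableSpace X] [MeasurableSpace Y] [MeasurableSpace W]
    (D : Measure (X × Y)) [IsProbabilityMeasure D]
    (p : Measure W) [IsProbabilityMeasure p]
    (m : ℕ) (lam : ℝ) (hlam : 0 < lam) (δ : ℝ) (hδ0 : 0 < δ)
    (LD : W → ℝ)
    (LS : W → (Fin m → X × Y) → ℝ)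
    (C : ℝ)
    (hC : C = Real.log (∫ w, ∫ S, Real.exp (lam * (LD w - LS w S))
        ∂(Measure.pi fun _ : Fin m => D) ∂p))
    (hint : Integrable
      (fun t : W × (Fin m → X × Y) => Real.exp (lam * (LD t.1 - LS t.1 t.2)))
      (p.prod (Measure.pi fun _ : Fin m => D))) :
    ENNReal.ofReal (1 - δ) ≤
      (Measure.pi fun _ : Fin m => D)
        {S | ∀ q : Measure W, IsProbabilityMeasure q → q ≪ p →
          Integrable LD q → Integrable (fun w => LS w S) q →
          Integrable (fun w => Real.log (q.rnDeriv p w).toReal) q →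
          ∫ w, LD w ∂q ≤ (∫ w, LS w S ∂q) +
            (C + (∫ w, Real.log (q.rnDeriv p w).toReal ∂q) + Real.log (1 / δ)) / lam} := by
  set μ := Measure.pi fun _ : Fin m => D
  set F : (Fin m → X × Y) → ℝ := fun S => ∫ w, exp (lam * (LD w - LS w S)) ∂p
  have hFpos : 0 < ∫ S, F S ∂μ := by
    rw [← integral_prod_symm _ hint]
    exact integral_exp_pos hint
  have hCF : exp C = ∫ S, F S ∂μ := by rw [hC, integral_integral_swap hint, exp_log hFpos]
  have hmarkov := ofReal_one_sub_le_measure_lt_integral_div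
    (ae_of_all μ fun S => integral_nonneg fun w => (exp_pos _).le) hint.integral_prod_right
    hFpos hδ0
  refine hmarkov.trans (measure_mono_ae ?_)
  filter_upwards [hint.prod_left_ae] with S hSp hS q _ hqp hLDq hLSq hllr
  have hB : F S ≤ exp (C + log (1 / δ)) := by
    rw [exp_add, exp_log (one_div_pos.mpr hδ0), hCF, mul_one_div]
    exact hS.le
  have hbound := integral_le_div_of_integral_exp_mul_le (g := fun w => LD w - LS w S)
    hqp hlam (hLDq.sub hLSq) hSp hllr hB
  rw [integral_sub hLDq hLSq] at hbound
  simp only [llr_def] at hbound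
  rw [add_comm (∫ w, LS w S ∂q), ← sub_le_iff_le_add]
  convert hbound using 2
  ring

/-- PAC-Bayes bound (Alquier et al.): with probability at least `1 - δ` over the draw
of the i.i.d. sample `S ∼ D^m`, simultaneously for every posterior `q ≪ p`,
`E_q[L_D] ≤ E_q[L_S] + (C(λ,p) + KL(q‖p) + log(1/δ)) / λ`. -/
theorem pac_bayes_bound
    {X Y W : Type*} [MeasurableSpace X] [MeasurableSpace Y] [MeasurableSpace W]
    (D : Measure (X × Y)) [IsProbabilityMeasure D]
    (p : Measure W) [IsProbabilityMeasure p]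
    (ℓ : W → X → Y → ℝ) (hmeas : Measurable fun t : W × X × Y => ℓ t.1 t.2.1 t.2.2)
    (m : ℕ) (hm : 0 < m) (lam : ℝ) (hlam : 0 < lam) (δ : ℝ) (hδ0 : 0 < δ) (hδ1 : δ ≤ 1)
    (LD : W → ℝ) (hLD : ∀ w, LD w = ∫ t, ℓ w t.1 t.2 ∂D)
    (LS : W → (Fin m → X × Y) → ℝ)
    (hLS : ∀ w S, LS w S = (1 / (m : ℝ)) * ∑ i, ℓ w (S i).1 (S i).2)
    (C : ℝ)
    (hC : C = Real.log (∫ w, ∫ S, Real.exp (lam * (LD w - LS w S))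
        ∂(Measure.pi fun _ : Fin m => D) ∂p))
    (hint : Integrable
      (fun t : W × (Fin m → X × Y) => Real.exp (lam * (LD t.1 - LS t.1 t.2)))
      (p.prod (Measure.pi fun _ : Fin m => D))) :
    ENNReal.ofReal (1 - δ) ≤
      (Measure.pi fun _ : Fin m => D)
        {S | ∀ q : Measure W, IsProbabilityMeasure q → q ≪ p →
          Integrable LD q → Integrable (fun w => LS w S) q →
          Integrable (fun w => Real.log (q.rnDeriv p w).toReal) q →
          ∫ w, LD w ∂q ≤ (∫ w, LS w S ∂q) +
            (C + (∫ w, Real.log (q.rnDeriv p w).toReal ∂q) + Real.log (1 / δ)) / lam} :=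
  pac_bayes_bound_general D p m lam hlam δ hδ0 LD LS C hC hint
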